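/- Let T be an optimal tree of order at least 3. Then every edge of T joins a vertex of type A to a vertex of type B. Moreover, for every edge st of T with s of type A and t of type B, letting T_s and T_t denote the connected components of T − st containing s and t respectively, the vertex s is of type A in T_s, the vertex t is of type B in T_t, and m(T) = m(T_s) m(T_t) + m(T_s − s) m(T_t − t). -/

import Mathlib

namespace PaperMM

open SimpleGraph

/-- `M` is a matching of `G`: a set of edges of `G` that are pairwise disjoint. -/
def IsMatchingSet {V : Type} (G : SimpleGraph V) (M : Set (Sym2 V)) : Prop :=
  M ⊆ G.edgeSet ∧ M.Pairwise fun e f => ∀ v : V, ¬(v ∈ e ∧ v ∈ f)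

/-- The matching number `μ(G)`: the maximum cardinality of a matching of `G`. -/
noncomputable def matchNum {V : Type} (G : SimpleGraph V) : ℕ :=
  sSup {n | ∃ M : Set (Sym2 V), IsMatchingSet G M ∧ M.ncard = n}

/-- The set of maximum matchings of `G`. -/
def MaximumMatchings {V : Type} (G : SimpleGraph V) : Set (Set (Sym2 V)) :=
  {M | IsMatchingSet G M ∧ M.ncard = matchNum G}

/-- `m(G)`: the number of maximum matchings of `G`. -/
noncomputable def mm {V : Type} (G : SimpleGraph V) : ℕ := (MaximumMatchings G).ncard

/-- The matching `M` covers the vertex `v`. -/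
def Covers {V : Type} (M : Set (Sym2 V)) (v : V) : Prop := ∃ e ∈ M, v ∈ e

/-- `v` is of type A in `G`: some maximum matching of `G` does not cover `v`. -/
def TypeA {V : Type} (G : SimpleGraph V) (v : V) : Prop :=
  ∃ M ∈ MaximumMatchings G, ¬ Covers M v

/-- `v` is of type B in `G`: every maximum matching of `G` covers `v`. -/
def TypeB {V : Type} (G : SimpleGraph V) (v : V) : Prop := ¬ TypeA G v

/-- `G` has a perfect matching. -/
def HasPerfectMatching {V : Type} (G : SimpleGraph V) : Prop :=
  ∃ M : Set (Sym2 V), IsMatchingSet G M ∧ ∀ v, Covers M v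

/-- The degree of `v` in `G`. -/
noncomputable def degS {V : Type} (G : SimpleGraph V) (v : V) : ℕ := (G.neighborSet v).ncard

/-- `G` is an optimal tree: a tree maximising `m` among all trees of the same order. -/
def OptimalTree {V : Type} [Fintype V] (G : SimpleGraph V) : Prop :=
  G.IsTree ∧ ∀ H : SimpleGraph (Fin (Fintype.card V)), H.IsTree → mm H ≤ mm G

/-- The vertex set of the connected component of `s` in `G - st`. -/
def sideSet {V : Type} (G : SimpleGraph V) (s t : V) : Set V :=
  {v | (G.deleteEdges {Sym2.mk s t}).Reachable s v}

/-- The connected component of `s` in `G - st`, as a graph. -/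
def sideGraph {V : Type} (G : SimpleGraph V) (s t : V) :
    SimpleGraph (sideSet G s t) :=
  (G.deleteEdges {Sym2.mk s t}).induce (sideSet G s t)

theorem mem_sideSet_self {V : Type} (G : SimpleGraph V) (s t : V) : s ∈ sideSet G s t :=
  SimpleGraph.Reachable.refl s

/-- The root of the component of `s` in `G - st`, i.e. `s` itself. -/
def sideRoot {V : Type} (G : SimpleGraph V) (s t : V) : sideSet G s t :=
  ⟨s, mem_sideSet_self G s t⟩

/-- `μ(T_s)` where `T_s` is the component of `s` in `G - st`. -/
noncomputable def sideMu {V : Type} (G : SimpleGraph V) (s t : V) : ℕ := matchNum (sideGraph G s t)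

/-- `m(T_s)` where `T_s` is the component of `s` in `G - st`. -/
noncomputable def sideM {V : Type} (G : SimpleGraph V) (s t : V) : ℕ := mm (sideGraph G s t)

/-- `μ(T_s − s)` where `T_s` is the component of `s` in `G - st`. -/
noncomputable def sideMuDel {V : Type} (G : SimpleGraph V) (s t : V) : ℕ :=
  matchNum ((G.deleteEdges {Sym2.mk s t}).induce (sideSet G s t \ {s}))

/-- `m(T_s − s)` where `T_s` is the component of `s` in `G - st`. -/
noncomputable def sideMDel {V : Type} (G : SimpleGraph V) (s t : V) : ℕ :=
  mm ((G.deleteEdges {Sym2.mk s t}).induce (sideSet G s t \ {s}))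

/-- A rooted graph: a vertex type, a graph on it, and a root vertex. -/
structure RGraph : Type 1 where
  V : Type
  G : SimpleGraph V
  root : V

/-- `m(T)` for a rooted graph. -/
noncomputable def RGraph.m (T : RGraph) : ℕ := mm T.G

/-- `m_0(T) = m(T − r)` for a rooted graph with root `r`. -/
noncomputable def RGraph.m0 (T : RGraph) : ℕ := mm (T.G.induce {v | v ≠ T.root})

/-- `m_1(T)`: the number of maximum matchings of `G` covering `r`. -/
noncomputable def mmCover {V : Type} (G : SimpleGraph V) (r : V) : ℕ :=
  {M | M ∈ MaximumMatchings G ∧ Covers M r}.ncard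

/-- The order (number of vertices) of a rooted graph. -/
noncomputable def RGraph.order (T : RGraph) : ℕ := Nat.card T.V

/-- Isomorphism of rooted graphs: a graph isomorphism mapping root to root. -/
def RGraph.RIso (T T' : RGraph) : Prop :=
  ∃ φ : T.G ≃g T'.G, φ T.root = T'.root

/-- The one-vertex rooted tree `L`. -/
def rL : RGraph := ⟨PUnit, ⊥, PUnit.unit⟩

/-- The fork `F`: the root `0` is adjacent to `1`, which is adjacent to the leaves `2`, `3`. -/
def rF : RGraph :=
  ⟨Fin 4, SimpleGraph.fromRel (fun a b => (a = 0 ∧ b = 1) ∨ (a = 1 ∧ b = 2) ∨ (a = 1 ∧ b = 3)), 0⟩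

/-- The rooted tree `B₂*`: a single edge rooted at one endpoint. -/
def rB2 : RGraph := ⟨Fin 2, SimpleGraph.fromRel (fun a b => a = 0 ∧ b = 1), 0⟩

/-- The rooted tree `A₃*`: a path on three vertices rooted at an endpoint. -/
def rA3 : RGraph :=
  ⟨Fin 3, SimpleGraph.fromRel (fun a b => (a = 0 ∧ b = 1) ∨ (a = 1 ∧ b = 2)), 0⟩

/-- The `k`-claw: the star `K_{1,k}` rooted at its center. -/
def claw (k : ℕ) : RGraph :=
  ⟨Fin (k + 1), SimpleGraph.fromRel (fun a b => a = 0 ∧ b ≠ 0), 0⟩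

/-- The chain construction `C`: seven new vertices are added to the rooted tree `T`;
`Sum.inr 0` is the new root `s`, `Sum.inr 1` is the vertex `b` adjacent to `s`, to the new
leaf `Sum.inr 2`, to the root `Sum.inr 3` of a new fork (with center `Sum.inr 4` and leaves
`Sum.inr 5`, `Sum.inr 6`), and to the old root of `T`. -/
def consC (T : RGraph) : RGraph where
  V := T.V ⊕ Fin 7
  G := SimpleGraph.fromRel (fun a b =>
    (∃ x y, T.G.Adj x y ∧ a = Sum.inl x ∧ b = Sum.inl y) ∨
    (a = Sum.inr 0 ∧ b = Sum.inr 1) ∨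
    (a = Sum.inr 1 ∧ b = Sum.inr 2) ∨
    (a = Sum.inr 1 ∧ b = Sum.inr 3) ∨
    (a = Sum.inr 3 ∧ b = Sum.inr 4) ∨
    (a = Sum.inr 4 ∧ b = Sum.inr 5) ∨
    (a = Sum.inr 4 ∧ b = Sum.inr 6) ∨
    (a = Sum.inr 1 ∧ b = Sum.inl T.root))
  root := Sum.inr 0

/-- `hang T S`: the disjoint union of rooted graphs `T` and `S` together with an edge
joining their roots; the root of the result is the root of `T`. -/
def hang (T S : RGraph) : RGraph where
  V := T.V ⊕ S.V
  G := SimpleGraph.fromRel (fun a b =>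
    (∃ x y, T.G.Adj x y ∧ a = Sum.inl x ∧ b = Sum.inl y) ∨
    (∃ x y, S.G.Adj x y ∧ a = Sum.inr x ∧ b = Sum.inr y) ∨
    (a = Sum.inl T.root ∧ b = Sum.inr S.root))
  root := Sum.inl T.root

/-- The rooted subtree of `G` cut off by the edge `st` on the side of `s`, rooted at `s`. -/
def sideRG {V : Type} (G : SimpleGraph V) (s t : V) : RGraph :=
  ⟨sideSet G s t, sideGraph G s t, sideRoot G s t⟩

/-- `y` lies on the path from `x` to the root of `T`. -/
def OnRootPath (T : RGraph) (x y : T.V) : Prop := ∀ p : T.G.Walk x T.root, y ∈ p.support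

/-- The rooted graph `T` contains a `k`-claw: either `T` itself is a `k`-claw, or
there is an edge `xy` of `T` with `y` on the path from `x` to the root such that
the component of `x` in `T − xy`, rooted at `x`, is a `k`-claw. -/
def ContainsClaw (T : RGraph) (k : ℕ) : Prop :=
  T.RIso (claw k) ∨
  ∃ x y : T.V, T.G.Adj x y ∧ OnRootPath T x y ∧ (sideRG T.G x y).RIso (claw k)

/-- The vertex set of the branch of the rooted graph `(G, r)` containing the
neighbour `x` of `r`: all vertices reachable from `x` avoiding `r`. -/
def branchSet {V : Type} (G : SimpleGraph V) (r x : V) : Set V :=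
  {v | ∃ p : G.Walk x v, r ∉ p.support}

/-- `m` of the branch of `(G, r)` at the neighbour `x`. -/
noncomputable def branchM {V : Type} (G : SimpleGraph V) (r x : V) : ℕ :=
  mm (G.induce (branchSet G r x))

/-- `m_0` of the branch of `(G, r)` at the neighbour `x` (the branch is rooted at `x`). -/
noncomputable def branchM0 {V : Type} (G : SimpleGraph V) (r x : V) : ℕ :=
  mm (G.induce (branchSet G r x \ {x}))

/-- The branch of `(G, r)` at the neighbour `x`, rooted at `x`, is of type A. -/
def BranchTypeA {V : Type} (G : SimpleGraph V) (r x : V) : Prop :=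
  ∃ h : x ∈ branchSet G r x, TypeA (G.induce (branchSet G r x)) ⟨x, h⟩

/-- The branch of `(G, r)` at the neighbour `x`, rooted at `x`, is of type B. -/
def BranchTypeB {V : Type} (G : SimpleGraph V) (r x : V) : Prop :=
  ∃ h : x ∈ branchSet G r x, TypeB (G.induce (branchSet G r x)) ⟨x, h⟩

/-- The bipartition condition for rooted trees: a one-vertex rooted tree fulfils it,
and a rooted tree fulfils it if all of its branches (each rooted at the corresponding
neighbour of the root) fulfil it and have type different from the type of the root. -/
inductive BipCond : {V : Type} → SimpleGraph V → V → Prop where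
  | single {V : Type} (G : SimpleGraph V) (r : V) (h : ∀ v : V, v = r) : BipCond G r
  | node {V : Type} (G : SimpleGraph V) (r : V)
      (hrec : ∀ (x : V), G.Adj r x → ∀ (hm : x ∈ branchSet G r x),
        BipCond (G.induce (branchSet G r x)) ⟨x, hm⟩)
      (htype : ∀ (x : V), G.Adj r x → ∀ (hm : x ∈ branchSet G r x),
        ¬ (TypeA G r ↔ TypeA (G.induce (branchSet G r x)) ⟨x, hm⟩)) :
      BipCond G r

/-- The integer sequence `G_j` with `G_0 = 0`, `G_1 = 1`, `G_{j+2} = 11 G_{j+1} − 9 G_j`. -/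
def Gseq : ℕ → ℤ
  | 0 => 0
  | 1 => 1
  | (n + 2) => 11 * Gseq (n + 1) - 9 * Gseq n

/-- Attach one new pendant vertex to the vertex `w` of `H`. -/
def addLeaf {W : Type} (H : SimpleGraph W) (w : W) : SimpleGraph (W ⊕ Unit) :=
  SimpleGraph.fromRel (fun a b =>
    (∃ x y, H.Adj x y ∧ a = Sum.inl x ∧ b = Sum.inl y) ∨
    (a = Sum.inl w ∧ b = Sum.inr ()))

/-- The 6-vertex spider with legs of lengths 1, 1 and 3 attached to the center `0`. -/
def spider6 : SimpleGraph (Fin 6) :=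
  SimpleGraph.fromRel (fun a b =>
    (a = 0 ∧ b = 1) ∨ (a = 0 ∧ b = 2) ∨ (a = 0 ∧ b = 3) ∨ (a = 3 ∧ b = 4) ∨ (a = 4 ∧ b = 5))

/-!
Cut a tree `T` at an edge `st` into `T_s ∋ s` and `T_t ∋ t`. A maximum matching of `T` either
avoids `st`, and is then the union of maximum matchings of `T_s` and `T_t` (possible only when
`μ(T_s) + μ(T_t) = μ(T)`), or contains `st` together with maximum matchings of `T_s − s` and
`T_t − t` (possible only when `μ(T_s − s) + μ(T_t − t) + 1 = μ(T)`). Since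
`μ(T_s − s) = μ(T_s) - [s is of type B in T_s]`, which alternatives occur is decided by the types of
the roots: `m(T)` is `m(T_s − s) m(T_t − t)` if both are of type A, `m(T_s) m(T_t)` if both are of
type B, and the sum of the two if the types differ; moreover `s` is of type A in `T` iff it is so
in `T_s` while `t` is of type B in `T_t`.

In an optimal tree the roots cannot have equal types. If some `u ∈ T_t` has the other type than
`t`, replacing the edge `st` by `su` yields a tree whose `m` is the sum formula, which is strictly
larger. Otherwise all vertices of `T_s` and `T_t` share one type. If it is A, both sides are single
vertices, because adjacent vertices of a forest are never both of type A. If it is B, the maximum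
matchings of both sides are perfect, hence unique (a forest has at most one perfect matching), so
`m(T) = 1`, while the star on the same vertices has `n - 1 ≥ 2` maximum matchings.
-/

section MatchingsIn

variable {V : Type} {G : SimpleGraph V} {S T : Set V} {M N M₁ M₂ : Set (Sym2 V)} {v : V}

/-- The matchings of `G.induce S` (compare `mm_induce`), kept with edges in `Sym2 V` so that
matchings on different vertex sets can be combined. -/
def IsMatchingIn (G : SimpleGraph V) (S : Set V) (M : Set (Sym2 V)) : Prop :=
  IsMatchingSet G M ∧ M ⊆ S.sym2

noncomputable def matchNumIn (G : SimpleGraph V) (S : Set V) : ℕ :=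
  sSup {n | ∃ M, IsMatchingIn G S M ∧ M.ncard = n}

def MaximumMatchingsIn (G : SimpleGraph V) (S : Set V) : Set (Set (Sym2 V)) :=
  {M | IsMatchingIn G S M ∧ M.ncard = matchNumIn G S}

noncomputable def mmIn (G : SimpleGraph V) (S : Set V) : ℕ := (MaximumMatchingsIn G S).ncard

def TypeAIn (G : SimpleGraph V) (S : Set V) (v : V) : Prop :=
  ∃ M ∈ MaximumMatchingsIn G S, ¬ Covers M v

theorem mem_sym2_iff_forall {e : Sym2 V} : e ∈ S.sym2 ↔ ∀ w ∈ e, w ∈ S := by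
  rw [Set.mem_sym2_iff_subset]
  rfl

theorem IsMatchingSet.subset (hM : IsMatchingSet G M) (hNM : N ⊆ M) : IsMatchingSet G N :=
  ⟨hNM.trans hM.1, hM.2.mono hNM⟩

theorem IsMatchingSet.eq_of_mem (hM : IsMatchingSet G M) {e f : Sym2 V} (he : e ∈ M) (hf : f ∈ M)
    (hve : v ∈ e) (hvf : v ∈ f) : e = f := by
  by_contra hne
  exact hM.2 he hf hne v ⟨hve, hvf⟩

theorem covers_union : Covers (M₁ ∪ M₂) v ↔ Covers M₁ v ∨ Covers M₂ v := by
  simp only [Covers, Set.mem_union, or_and_right, exists_or]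

theorem not_covers_of_subset_sym2 (hM : M ⊆ S.sym2) (hv : v ∉ S) : ¬ Covers M v :=
  fun ⟨_, he, hve⟩ => hv (mem_sym2_iff_forall.mp (hM he) v hve)

theorem IsMatchingSet.inter_sym2 (hM : IsMatchingSet G M) (S : Set V) :
    IsMatchingIn G S (M ∩ S.sym2) :=
  ⟨hM.subset Set.inter_subset_left, Set.inter_subset_right⟩

theorem IsMatchingSet.insert (hM : IsMatchingSet G M) {a b : V} (hab : G.Adj a b)
    (ha : ¬ Covers M a) (hb : ¬ Covers M b) : IsMatchingSet G (insert s(a, b) M) := by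
  refine ⟨Set.insert_subset hab hM.1, Set.pairwise_insert.mpr ⟨hM.2, fun f hf _ => ?_⟩⟩
  have key : ∀ w ∈ s(a, b), w ∉ f := by
    intro w hw hwf
    rcases Sym2.mem_iff.mp hw with rfl | rfl
    exacts [ha ⟨f, hf, hwf⟩, hb ⟨f, hf, hwf⟩]
  exact ⟨fun w ⟨hw, hwf⟩ => key w hw hwf, fun w ⟨hwf, hw⟩ => key w hw hwf⟩

theorem IsMatchingIn.mono (hM : IsMatchingIn G S M) (hST : S ⊆ T) : IsMatchingIn G T M :=
  ⟨hM.1, fun _ he => mem_sym2_iff_forall.mpr fun w hw =>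
    hST (mem_sym2_iff_forall.mp (hM.2 he) w hw)⟩

theorem isMatchingIn_empty : IsMatchingIn G S ∅ :=
  ⟨⟨Set.empty_subset _, Set.pairwise_empty _⟩, Set.empty_subset _⟩

theorem isMatchingIn_univ : IsMatchingIn G Set.univ M ↔ IsMatchingSet G M := by
  simp [IsMatchingIn]

theorem matchNumIn_univ : matchNumIn G Set.univ = matchNum G := by
  simp only [matchNumIn, matchNum, isMatchingIn_univ]

theorem maximumMatchingsIn_univ : MaximumMatchingsIn G Set.univ = MaximumMatchings G := by
  simp only [MaximumMatchingsIn, MaximumMatchings, isMatchingIn_univ, matchNumIn_univ]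

theorem mmIn_univ : mmIn G Set.univ = mm G := by
  rw [mmIn, mm, maximumMatchingsIn_univ]

variable [Finite V]

theorem bddAbove_ncard_isMatchingIn (G : SimpleGraph V) (S : Set V) :
    BddAbove {n | ∃ M, IsMatchingIn G S M ∧ M.ncard = n} :=
  ⟨(Set.univ : Set (Sym2 V)).ncard, by
    rintro n ⟨M, -, rfl⟩
    exact Set.ncard_le_ncard (Set.subset_univ M)⟩

theorem IsMatchingIn.ncard_le (hM : IsMatchingIn G S M) : M.ncard ≤ matchNumIn G S :=
  le_csSup (bddAbove_ncard_isMatchingIn G S) ⟨M, hM, rfl⟩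

theorem IsMatchingSet.ncard_le (hM : IsMatchingSet G M) : M.ncard ≤ matchNum G := by
  rw [← matchNumIn_univ]
  exact (isMatchingIn_univ.mpr hM).ncard_le

theorem maximumMatchingsIn_nonempty (G : SimpleGraph V) (S : Set V) :
    (MaximumMatchingsIn G S).Nonempty :=
  Nat.sSup_mem (s := {n | ∃ M, IsMatchingIn G S M ∧ M.ncard = n})
    ⟨0, ∅, isMatchingIn_empty, Set.ncard_empty _⟩ (bddAbove_ncard_isMatchingIn G S)

theorem mmIn_pos (G : SimpleGraph V) (S : Set V) : 0 < mmIn G S :=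
  (Set.ncard_pos (Set.toFinite _)).mpr (maximumMatchingsIn_nonempty G S)

theorem matchNumIn_mono (hST : S ⊆ T) : matchNumIn G S ≤ matchNumIn G T := by
  obtain ⟨M, hM, hc⟩ := maximumMatchingsIn_nonempty G S
  exact hc ▸ (hM.mono hST).ncard_le

theorem mem_maximumMatchings_of_forall_ncard_le (hM : IsMatchingSet G M)
    (hle : ∀ N, IsMatchingSet G N → N.ncard ≤ M.ncard) : M ∈ MaximumMatchings G := by
  obtain ⟨N, hN, hc⟩ := maximumMatchingsIn_nonempty G Set.univ
  rw [matchNumIn_univ] at hc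
  exact ⟨hM, le_antisymm hM.ncard_le (hc ▸ hle N (isMatchingIn_univ.mp hN))⟩

end MatchingsIn

section Transport

variable {V W : Type} {G : SimpleGraph V} {H : SimpleGraph W}

theorem mem_sym2_map_iff {f : V → W} (hf : Function.Injective f) {v : V} {e : Sym2 V} :
    f v ∈ Sym2.map f e ↔ v ∈ e := by
  rw [Sym2.mem_map]
  exact ⟨fun ⟨u, hu, huv⟩ => hf huv ▸ hu, fun hv => ⟨v, hv, rfl⟩⟩

theorem covers_image_sym2_map {f : V → W} (hf : Function.Injective f) (N : Set (Sym2 V))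
    (v : V) : Covers (Sym2.map f '' N) (f v) ↔ Covers N v := by
  constructor
  · rintro ⟨_, ⟨e, he, rfl⟩, hv⟩
    exact ⟨e, he, (mem_sym2_map_iff hf).mp hv⟩
  · rintro ⟨e, he, hv⟩
    exact ⟨_, ⟨e, he, rfl⟩, (mem_sym2_map_iff hf).mpr hv⟩

theorem sym2_range (f : V → W) : (Set.range f).sym2 = Set.range (Sym2.map f) := by
  rw [← Set.image_univ, Set.sym2_image, Set.sym2_univ, Set.image_univ]

variable (f : G ↪g H)

theorem isMatchingSet_iff_isMatchingIn_range {N : Set (Sym2 V)} :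
    IsMatchingSet G N ↔ IsMatchingIn H (Set.range f) (Sym2.map f '' N) := by
  rw [IsMatchingIn, sym2_range, and_iff_left (Set.image_subset_range _ _)]
  constructor
  · rintro ⟨hsub, hpw⟩
    refine ⟨?_, ?_⟩
    · rintro _ ⟨e, he, rfl⟩
      induction e with
      | _ a b => simpa using hsub he
    · rintro _ ⟨e, he, rfl⟩ _ ⟨e', he', rfl⟩ hne _ ⟨hw, hw'⟩
      obtain ⟨u, hu, rfl⟩ := Sym2.mem_map.mp hw
      exact hpw he he' (fun h => hne (h ▸ rfl)) u ⟨hu, (mem_sym2_map_iff f.injective).mp hw'⟩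
  · rintro ⟨hsub, hpw⟩
    refine ⟨fun e he => ?_, fun e he e' he' hne u ⟨hu, hu'⟩ => ?_⟩
    · induction e with
      | _ a b => simpa using hsub ⟨_, he, rfl⟩
    · exact hpw ⟨e, he, rfl⟩ ⟨e', he', rfl⟩ (fun h => hne (Sym2.map.injective f.injective h))
        (f u) ⟨(mem_sym2_map_iff f.injective).mpr hu, (mem_sym2_map_iff f.injective).mpr hu'⟩

theorem exists_eq_image_of_isMatchingIn_range {M : Set (Sym2 W)}
    (hM : IsMatchingIn H (Set.range f) M) : ∃ N, M = Sym2.map f '' N :=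
  ⟨Sym2.map f ⁻¹' M,
    (Set.image_preimage_eq_of_subset (sym2_range (⇑f) ▸ hM.2)).symm⟩

theorem ncard_image_sym2_map (N : Set (Sym2 V)) : (Sym2.map f '' N).ncard = N.ncard :=
  Set.ncard_image_of_injective _ (Sym2.map.injective f.injective)

theorem matchNum_eq_matchNumIn_range : matchNum G = matchNumIn H (Set.range f) := by
  simp only [matchNum, matchNumIn]
  congr 1
  ext n
  constructor
  · rintro ⟨N, hN, rfl⟩
    exact ⟨_, (isMatchingSet_iff_isMatchingIn_range f).mp hN, ncard_image_sym2_map f N⟩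
  · rintro ⟨M, hM, rfl⟩
    obtain ⟨N, rfl⟩ := exists_eq_image_of_isMatchingIn_range f hM
    exact ⟨N, (isMatchingSet_iff_isMatchingIn_range f).mpr hM, (ncard_image_sym2_map f N).symm⟩

theorem maximumMatchingsIn_range :
    MaximumMatchingsIn H (Set.range f) = (Sym2.map f '' ·) '' MaximumMatchings G := by
  ext M
  constructor
  · rintro ⟨hM, hc⟩
    obtain ⟨N, rfl⟩ := exists_eq_image_of_isMatchingIn_range f hM
    refine ⟨N, ⟨(isMatchingSet_iff_isMatchingIn_range f).mpr hM, ?_⟩, rfl⟩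
    rw [matchNum_eq_matchNumIn_range f, ← hc, ncard_image_sym2_map]
  · rintro ⟨N, ⟨hN, hc⟩, rfl⟩
    refine ⟨(isMatchingSet_iff_isMatchingIn_range f).mp hN, ?_⟩
    rw [ncard_image_sym2_map, hc, matchNum_eq_matchNumIn_range f]

theorem mm_eq_mmIn_range : mm G = mmIn H (Set.range f) := by
  rw [mmIn, maximumMatchingsIn_range, Set.ncard_image_of_injective _
    (Set.image_injective.mpr (Sym2.map.injective f.injective)), mm]

theorem typeA_iff_typeAIn_range (v : V) : TypeA G v ↔ TypeAIn H (Set.range f) (f v) := by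
  simp only [TypeA, TypeAIn, maximumMatchingsIn_range, Set.exists_mem_image,
    covers_image_sym2_map f.injective]

theorem mm_iso (φ : G ≃g H) : mm G = mm H := by
  rw [mm_eq_mmIn_range φ.toEmbedding, ← mmIn_univ]
  congr
  exact Set.range_eq_univ.mpr φ.surjective

theorem mm_induce (S : Set W) : mm (H.induce S) = mmIn H S := by
  rw [mm_eq_mmIn_range (Embedding.induce S)]
  congr
  exact Subtype.range_coe

theorem typeA_induce {S : Set W} (v : S) : TypeA (H.induce S) v ↔ TypeAIn H S v := by
  rw [typeA_iff_typeAIn_range (Embedding.induce S)]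
  congr!
  exact Subtype.range_coe

end Transport

section DeleteVertex

variable {V : Type} {G : SimpleGraph V} {S : Set V} {M : Set (Sym2 V)} {v : V}

theorem IsMatchingIn.diff_singleton (hM : IsMatchingIn G S M) (hv : ¬ Covers M v) :
    IsMatchingIn G (S \ {v}) M :=
  ⟨hM.1, fun e he => mem_sym2_iff_forall.mpr fun w hw =>
    ⟨mem_sym2_iff_forall.mp (hM.2 he) w hw, fun hwv => hv ⟨e, he, hwv ▸ hw⟩⟩⟩

theorem IsMatchingIn.not_covers (hM : IsMatchingIn G (S \ {v}) M) : ¬ Covers M v :=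
  fun ⟨_, he, hv⟩ => (mem_sym2_iff_forall.mp (hM.2 he) v hv).2 rfl

variable [Finite V]

theorem matchNumIn_le_diff_singleton_add_one (G : SimpleGraph V) (S : Set V) (v : V) :
    matchNumIn G S ≤ matchNumIn G (S \ {v}) + 1 := by
  obtain ⟨M, hM, hc⟩ := maximumMatchingsIn_nonempty G S
  rw [← hc]
  by_cases hv : Covers M v
  · obtain ⟨e, he, hve⟩ := hv
    have hMe : IsMatchingIn G (S \ {v}) (M \ {e}) := by
      refine ⟨hM.1.subset Set.sdiff_subset, fun f hf => mem_sym2_iff_forall.mpr fun w hw =>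
        ⟨mem_sym2_iff_forall.mp (hM.2 hf.1) w hw, fun hwv => hf.2 ?_⟩⟩
      exact hM.1.eq_of_mem hf.1 he (hwv ▸ hw) hve
    rw [← Set.ncard_sdiff_singleton_add_one he]
    exact Nat.add_le_add_right hMe.ncard_le 1
  · exact (hM.diff_singleton hv).ncard_le.trans (Nat.le_succ _)

theorem typeAIn_iff_matchNumIn_diff_singleton :
    TypeAIn G S v ↔ matchNumIn G (S \ {v}) = matchNumIn G S := by
  constructor
  · rintro ⟨M, ⟨hM, hc⟩, hv⟩
    exact le_antisymm (matchNumIn_mono Set.sdiff_subset) (hc ▸ (hM.diff_singleton hv).ncard_le)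
  · intro h
    obtain ⟨M, hM, hc⟩ := maximumMatchingsIn_nonempty G (S \ {v})
    exact ⟨M, ⟨hM.mono Set.sdiff_subset, hc.trans h⟩, hM.not_covers⟩

theorem not_typeAIn_iff_matchNumIn_diff_singleton :
    ¬ TypeAIn G S v ↔ matchNumIn G (S \ {v}) + 1 = matchNumIn G S := by
  have := matchNumIn_mono (G := G) (Set.sdiff_subset : S \ {v} ⊆ S)
  have := matchNumIn_le_diff_singleton_add_one G S v
  rw [typeAIn_iff_matchNumIn_diff_singleton]
  omega

theorem TypeAIn.mmIn_diff_singleton_le (h : TypeAIn G S v) : mmIn G (S \ {v}) ≤ mmIn G S :=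
  Set.ncard_le_ncard fun _ ⟨hM, hc⟩ =>
    ⟨hM.mono Set.sdiff_subset, hc.trans (typeAIn_iff_matchNumIn_diff_singleton.mp h)⟩

end DeleteVertex

section Congr

variable {V : Type} {G G' : SimpleGraph V} {S : Set V}

theorem induce_eq_of_adj_iff (h : ∀ a ∈ S, ∀ b ∈ S, G.Adj a b ↔ G'.Adj a b) :
    G.induce S = G'.induce S := by
  ext a b
  exact h a a.2 b b.2

theorem mmIn_congr [Finite V] (h : ∀ a ∈ S, ∀ b ∈ S, G.Adj a b ↔ G'.Adj a b) :
    mmIn G S = mmIn G' S := by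
  rw [← mm_induce, ← mm_induce, induce_eq_of_adj_iff h]

theorem typeAIn_congr (h : ∀ a ∈ S, ∀ b ∈ S, G.Adj a b ↔ G'.Adj a b) {v : V} (hv : v ∈ S) :
    TypeAIn G S v ↔ TypeAIn G' S v := by
  rw [← typeA_induce ⟨v, hv⟩, ← typeA_induce ⟨v, hv⟩, induce_eq_of_adj_iff h]

end Congr

structure BridgeSplit {V : Type} (G : SimpleGraph V) (X Y : Set V) (s t : V) : Prop where
  adj : G.Adj s t
  left_mem : s ∈ X
  right_mem : t ∈ Y
  isCompl : IsCompl X Y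
  eq_of_adj : ∀ ⦃a b⦄, G.Adj a b → a ∈ X → b ∈ Y → a = s ∧ b = t

namespace BridgeSplit

variable {V : Type} {G : SimpleGraph V} {X Y : Set V} {s t : V} {M M₁ M₂ : Set (Sym2 V)}

theorem symm (h : BridgeSplit G X Y s t) : BridgeSplit G Y X t s where
  adj := h.adj.symm
  left_mem := h.right_mem
  right_mem := h.left_mem
  isCompl := h.isCompl.symm
  eq_of_adj _ _ hab ha hb := (h.eq_of_adj hab.symm hb ha).symm

theorem mem_right_iff (h : BridgeSplit G X Y s t) {x : V} : x ∈ Y ↔ x ∉ X := by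
  rw [← h.isCompl.compl_eq]
  rfl

theorem notMem_right (h : BridgeSplit G X Y s t) {x : V} (hx : x ∈ X) : x ∉ Y :=
  fun hy => h.mem_right_iff.mp hy hx

theorem bridge_notMem_sym2_left (h : BridgeSplit G X Y s t) : s(s, t) ∉ X.sym2 :=
  fun hst => h.symm.notMem_right h.right_mem (Set.mk_mem_sym2_iff.mp hst).2

theorem disjoint_sym2 (h : BridgeSplit G X Y s t) : Disjoint X.sym2 Y.sym2 := by
  rw [Set.disjoint_iff_inter_eq_empty, ← Set.sym2_inter,
    Set.disjoint_iff_inter_eq_empty.mp h.isCompl.disjoint, Set.sym2_empty]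

theorem mem_sym2_or (h : BridgeSplit G X Y s t) {e : Sym2 V} (he : e ∈ G.edgeSet) :
    e ∈ X.sym2 ∨ e ∈ Y.sym2 ∨ e = s(s, t) := by
  induction e with
  | _ a b =>
    by_cases ha : a ∈ X <;> by_cases hb : b ∈ X
    · exact Or.inl ⟨ha, hb⟩
    · obtain ⟨rfl, rfl⟩ := h.eq_of_adj he ha (h.mem_right_iff.mpr hb)
      exact Or.inr (Or.inr rfl)
    · obtain ⟨rfl, rfl⟩ := h.eq_of_adj (G.adj_symm he) hb (h.mem_right_iff.mpr ha)
      exact Or.inr (Or.inr Sym2.eq_swap)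
    · exact Or.inr (Or.inl ⟨h.mem_right_iff.mpr ha, h.mem_right_iff.mpr hb⟩)

theorem eq_union_of_bridge_notMem (h : BridgeSplit G X Y s t) (hM : IsMatchingSet G M)
    (he : s(s, t) ∉ M) : M = (M ∩ X.sym2) ∪ (M ∩ Y.sym2) := by
  rw [← Set.inter_union_distrib_left, eq_comm, Set.inter_eq_left]
  intro e heM
  rcases h.mem_sym2_or (hM.1 heM) with hX | hY | rfl
  exacts [Or.inl hX, Or.inr hY, absurd heM he]

theorem eq_insert_of_bridge_mem (h : BridgeSplit G X Y s t) (hM : IsMatchingSet G M)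
    (he : s(s, t) ∈ M) : M = insert s(s, t) ((M ∩ X.sym2) ∪ (M ∩ Y.sym2)) := by
  refine le_antisymm (fun e heM => ?_)
    (Set.insert_subset he (Set.union_subset Set.inter_subset_left Set.inter_subset_left))
  rcases h.mem_sym2_or (hM.1 heM) with hX | hY | rfl
  exacts [Or.inr (Or.inl ⟨heM, hX⟩), Or.inr (Or.inr ⟨heM, hY⟩), Or.inl rfl]

theorem isMatchingIn_inter_sym2_diff (h : BridgeSplit G X Y s t) (hM : IsMatchingSet G M)
    (he : s(s, t) ∈ M) : IsMatchingIn G (X \ {s}) (M ∩ X.sym2) :=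
  (hM.inter_sym2 X).diff_singleton fun ⟨_, ⟨hfM, hfX⟩, hsf⟩ =>
    h.bridge_notMem_sym2_left (hM.eq_of_mem hfM he hsf (Sym2.mem_mk_left s t) ▸ hfX)

theorem isMatchingSet_union (h : BridgeSplit G X Y s t) (h₁ : IsMatchingIn G X M₁)
    (h₂ : IsMatchingIn G Y M₂) : IsMatchingSet G (M₁ ∪ M₂) := by
  refine ⟨Set.union_subset h₁.1.1 h₂.1.1, Set.pairwise_union.mpr ⟨h₁.1.2, h₂.1.2, ?_⟩⟩
  have key : ∀ e ∈ M₁, ∀ f ∈ M₂, ∀ w, w ∈ e → w ∉ f := fun e he f hf w hwe hwf =>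
    h.mem_right_iff.mp (mem_sym2_iff_forall.mp (h₂.2 hf) w hwf)
      (mem_sym2_iff_forall.mp (h₁.2 he) w hwe)
  exact fun e he f hf _ => ⟨fun w ⟨hwe, hwf⟩ => key e he f hf w hwe hwf,
    fun w ⟨hwf, hwe⟩ => key e he f hf w hwe hwf⟩

theorem ncard_union [Finite V] (h : BridgeSplit G X Y s t) (h₁ : M₁ ⊆ X.sym2) (h₂ : M₂ ⊆ Y.sym2) :
    (M₁ ∪ M₂).ncard = M₁.ncard + M₂.ncard :=
  Set.ncard_union_eq (h.disjoint_sym2.mono h₁ h₂)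

theorem bridge_notMem_union (h : BridgeSplit G X Y s t) (h₁ : M₁ ⊆ X.sym2) (h₂ : M₂ ⊆ Y.sym2) :
    s(s, t) ∉ M₁ ∪ M₂ := by
  rintro (he | he)
  · exact h.bridge_notMem_sym2_left (h₁ he)
  · exact h.symm.bridge_notMem_sym2_left (Sym2.eq_swap ▸ h₂ he)

theorem isMatchingSet_insert (h : BridgeSplit G X Y s t) (h₁ : IsMatchingIn G (X \ {s}) M₁)
    (h₂ : IsMatchingIn G (Y \ {t}) M₂) : IsMatchingSet G (insert s(s, t) (M₁ ∪ M₂)) := by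
  have h₁' := h₁.mono Set.sdiff_subset
  have h₂' := h₂.mono Set.sdiff_subset
  refine (h.isMatchingSet_union h₁' h₂').insert h.adj ?_ ?_ <;> rw [covers_union, not_or]
  · exact ⟨h₁.not_covers, not_covers_of_subset_sym2 h₂'.2 (h.notMem_right h.left_mem)⟩
  · exact ⟨not_covers_of_subset_sym2 h₁'.2 (h.symm.notMem_right h.right_mem), h₂.not_covers⟩

theorem ncard_insert [Finite V] (h : BridgeSplit G X Y s t) (h₁ : M₁ ⊆ X.sym2) (h₂ : M₂ ⊆ Y.sym2) :
    (insert s(s, t) (M₁ ∪ M₂)).ncard = M₁.ncard + M₂.ncard + 1 := by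
  rw [Set.ncard_insert_of_notMem (h.bridge_notMem_union h₁ h₂), h.ncard_union h₁ h₂]

theorem union_inter_sym2_left (h : BridgeSplit G X Y s t) (h₁ : M₁ ⊆ X.sym2) (h₂ : M₂ ⊆ Y.sym2) :
    (M₁ ∪ M₂) ∩ X.sym2 = M₁ := by
  rw [Set.union_inter_distrib_right, Set.inter_eq_left.mpr h₁,
    Set.disjoint_iff_inter_eq_empty.mp (h.disjoint_sym2.symm.mono_left h₂), Set.union_empty]

theorem union_inter_sym2_right (h : BridgeSplit G X Y s t) (h₁ : M₁ ⊆ X.sym2) (h₂ : M₂ ⊆ Y.sym2) :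
    (M₁ ∪ M₂) ∩ Y.sym2 = M₂ := by
  rw [Set.union_comm, h.symm.union_inter_sym2_left h₂ h₁]

theorem injOn_union (h : BridgeSplit G X Y s t) :
    Set.InjOn (fun p : Set (Sym2 V) × Set (Sym2 V) => p.1 ∪ p.2)
      {p | p.1 ⊆ X.sym2 ∧ p.2 ⊆ Y.sym2} := by
  rintro ⟨M₁, M₂⟩ ⟨h₁, h₂⟩ ⟨N₁, N₂⟩ ⟨g₁, g₂⟩ heq
  dsimp only at h₁ h₂ g₁ g₂ heq
  refine Prod.ext ?_ ?_
  · rw [← h.union_inter_sym2_left h₁ h₂, heq, h.union_inter_sym2_left g₁ g₂]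
  · rw [← h.union_inter_sym2_right h₁ h₂, heq, h.union_inter_sym2_right g₁ g₂]

theorem injOn_insert_union (h : BridgeSplit G X Y s t) :
    Set.InjOn (fun p : Set (Sym2 V) × Set (Sym2 V) => insert s(s, t) (p.1 ∪ p.2))
      {p | p.1 ⊆ X.sym2 ∧ p.2 ⊆ Y.sym2} := by
  intro p hp q hq heq
  refine h.injOn_union hp hq ?_
  have hX := congrArg (· ∩ X.sym2) heq
  have hY := congrArg (· ∩ Y.sym2) heq
  simp only [Set.insert_inter_of_notMem h.bridge_notMem_sym2_left,
    Set.insert_inter_of_notMem (Sym2.eq_swap (a := s) ▸ h.symm.bridge_notMem_sym2_left)] at hX hY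
  rw [h.union_inter_sym2_left hp.1 hp.2, h.union_inter_sym2_left hq.1 hq.2] at hX
  rw [h.union_inter_sym2_right hp.1 hp.2, h.union_inter_sym2_right hq.1 hq.2] at hY
  exact congrArg₂ (· ∪ ·) hX hY

variable [Finite V]

theorem add_matchNumIn_le (h : BridgeSplit G X Y s t) :
    matchNumIn G X + matchNumIn G Y ≤ matchNum G := by
  obtain ⟨M₁, h₁, hc₁⟩ := maximumMatchingsIn_nonempty G X
  obtain ⟨M₂, h₂, hc₂⟩ := maximumMatchingsIn_nonempty G Y
  rw [← hc₁, ← hc₂, ← h.ncard_union h₁.2 h₂.2]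
  exact (h.isMatchingSet_union h₁ h₂).ncard_le

theorem add_matchNumIn_diff_add_one_le (h : BridgeSplit G X Y s t) :
    matchNumIn G (X \ {s}) + matchNumIn G (Y \ {t}) + 1 ≤ matchNum G := by
  obtain ⟨M₁, h₁, hc₁⟩ := maximumMatchingsIn_nonempty G (X \ {s})
  obtain ⟨M₂, h₂, hc₂⟩ := maximumMatchingsIn_nonempty G (Y \ {t})
  rw [← hc₁, ← hc₂, ← h.ncard_insert (h₁.mono Set.sdiff_subset).2 (h₂.mono Set.sdiff_subset).2]
  exact (h.isMatchingSet_insert h₁ h₂).ncard_le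

theorem maximumMatchings_eq (h : BridgeSplit G X Y s t) :
    MaximumMatchings G =
      {M | matchNumIn G X + matchNumIn G Y = matchNum G ∧
        M ∈ (fun p => p.1 ∪ p.2) '' (MaximumMatchingsIn G X ×ˢ MaximumMatchingsIn G Y)} ∪
      {M | matchNumIn G (X \ {s}) + matchNumIn G (Y \ {t}) + 1 = matchNum G ∧
        M ∈ (fun p => insert s(s, t) (p.1 ∪ p.2)) ''
          (MaximumMatchingsIn G (X \ {s}) ×ˢ MaximumMatchingsIn G (Y \ {t}))} := by
  have hU := h.add_matchNumIn_le
  have hI := h.add_matchNumIn_diff_add_one_le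
  ext M
  constructor
  · rintro ⟨hM, hc⟩
    by_cases he : s(s, t) ∈ M
    · have h₁ := h.isMatchingIn_inter_sym2_diff hM he
      have h₂ := h.symm.isMatchingIn_inter_sym2_diff hM (Sym2.eq_swap ▸ he)
      have hn : M.ncard = (M ∩ X.sym2).ncard + (M ∩ Y.sym2).ncard + 1 := by
        rw [← h.ncard_insert Set.inter_subset_right Set.inter_subset_right,
          ← h.eq_insert_of_bridge_mem hM he]
      have := h₁.ncard_le
      have := h₂.ncard_le
      have m₁ : M ∩ X.sym2 ∈ MaximumMatchingsIn G (X \ {s}) := ⟨h₁, by omega⟩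
      have m₂ : M ∩ Y.sym2 ∈ MaximumMatchingsIn G (Y \ {t}) := ⟨h₂, by omega⟩
      exact Or.inr ⟨by omega, (_, _), ⟨m₁, m₂⟩, (h.eq_insert_of_bridge_mem hM he).symm⟩
    · have h₁ := hM.inter_sym2 X
      have h₂ := hM.inter_sym2 Y
      have hn : M.ncard = (M ∩ X.sym2).ncard + (M ∩ Y.sym2).ncard := by
        rw [← h.ncard_union Set.inter_subset_right Set.inter_subset_right,
          ← h.eq_union_of_bridge_notMem hM he]
      have := h₁.ncard_le
      have := h₂.ncard_le
      have m₁ : M ∩ X.sym2 ∈ MaximumMatchingsIn G X := ⟨h₁, by omega⟩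
      have m₂ : M ∩ Y.sym2 ∈ MaximumMatchingsIn G Y := ⟨h₂, by omega⟩
      exact Or.inl ⟨by omega, (_, _), ⟨m₁, m₂⟩, (h.eq_union_of_bridge_notMem hM he).symm⟩
  · rintro (⟨hμ, ⟨M₁, M₂⟩, ⟨⟨h₁, hc₁⟩, h₂, hc₂⟩, rfl⟩ | ⟨hμ, ⟨M₁, M₂⟩, ⟨⟨h₁, hc₁⟩, h₂, hc₂⟩, rfl⟩)
    · exact ⟨h.isMatchingSet_union h₁ h₂, by rw [h.ncard_union h₁.2 h₂.2, hc₁, hc₂, hμ]⟩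
    · refine ⟨h.isMatchingSet_insert h₁ h₂, ?_⟩
      rw [h.ncard_insert (h₁.mono Set.sdiff_subset).2 (h₂.mono Set.sdiff_subset).2, hc₁, hc₂, hμ]

theorem matchNum_eq_max (h : BridgeSplit G X Y s t) :
    matchNum G = max (matchNumIn G X + matchNumIn G Y)
      (matchNumIn G (X \ {s}) + matchNumIn G (Y \ {t}) + 1) := by
  obtain ⟨M, hM⟩ := maximumMatchingsIn_univ (G := G) ▸ maximumMatchingsIn_nonempty G Set.univ
  have := h.add_matchNumIn_le
  have := h.add_matchNumIn_diff_add_one_le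
  rw [h.maximumMatchings_eq] at hM
  rcases hM with ⟨hμ, -⟩ | ⟨hμ, -⟩ <;> omega

theorem mm_eq (h : BridgeSplit G X Y s t) :
    mm G = (if matchNumIn G X + matchNumIn G Y = matchNum G then
        mmIn G X * mmIn G Y else 0) +
      (if matchNumIn G (X \ {s}) + matchNumIn G (Y \ {t}) + 1 = matchNum G then
        mmIn G (X \ {s}) * mmIn G (Y \ {t}) else 0) := by
  have hdisj : ∀ M ∈ (fun p => p.1 ∪ p.2) '' (MaximumMatchingsIn G X ×ˢ MaximumMatchingsIn G Y),
      s(s, t) ∉ M := by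
    rintro _ ⟨⟨M₁, M₂⟩, ⟨h₁, h₂⟩, rfl⟩
    exact h.bridge_notMem_union h₁.1.2 h₂.1.2
  rw [mm, h.maximumMatchings_eq, Set.ncard_union_eq (Set.disjoint_left.mpr
    fun M hU hI => hdisj M hU.2 (by obtain ⟨-, p, -, rfl⟩ := hI; exact Set.mem_insert _ _))]
  congr 1 <;> split_ifs with hμ <;> simp only [hμ, true_and, false_and, Set.ofPred_false,
    Set.ncard_empty, Set.ofPred_mem_eq]
  · rw [(h.injOn_union.mono ?_).ncard_image, Set.ncard_prod]
    exacts [rfl, fun _ hp => ⟨hp.1.1.2, hp.2.1.2⟩]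
  · rw [(h.injOn_insert_union.mono ?_).ncard_image, Set.ncard_prod]
    exacts [rfl, fun _ hp =>
      ⟨(hp.1.1.mono Set.sdiff_subset).2, (hp.2.1.mono Set.sdiff_subset).2⟩]

theorem typeA_left_iff (h : BridgeSplit G X Y s t) :
    TypeA G s ↔ TypeAIn G X s ∧ ¬ TypeAIn G Y t := by
  have hμ := h.matchNum_eq_max
  have := matchNumIn_mono (G := G) (Set.sdiff_subset : Y \ {t} ⊆ Y)
  have := matchNumIn_le_diff_singleton_add_one G Y t
  rw [not_typeAIn_iff_matchNumIn_diff_singleton]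
  constructor
  · rintro ⟨M, hM, hs⟩
    rw [h.maximumMatchings_eq] at hM
    rcases hM with ⟨hU, ⟨M₁, M₂⟩, ⟨hM₁, -⟩, rfl⟩ | ⟨-, p, -, rfl⟩
    · have hA : TypeAIn G X s := ⟨M₁, hM₁, fun hc => hs (covers_union.mpr (Or.inl hc))⟩
      have := typeAIn_iff_matchNumIn_diff_singleton.mp hA
      exact ⟨hA, by omega⟩
    · exact absurd ⟨_, Set.mem_insert _ _, Sym2.mem_mk_left s t⟩ hs
  · rintro ⟨⟨M₁, hM₁, hs⟩, ht⟩
    have := typeAIn_iff_matchNumIn_diff_singleton.mp ⟨M₁, hM₁, hs⟩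
    obtain ⟨M₂, hM₂⟩ := maximumMatchingsIn_nonempty G Y
    refine ⟨M₁ ∪ M₂, ?_, ?_⟩
    · rw [h.maximumMatchings_eq]
      exact Or.inl ⟨by omega, (M₁, M₂), ⟨hM₁, hM₂⟩, rfl⟩
    · rw [covers_union, not_or]
      exact ⟨hs, not_covers_of_subset_sym2 hM₂.1.2 (h.notMem_right h.left_mem)⟩

theorem mm_of_typeAIn_of_typeAIn (h : BridgeSplit G X Y s t) (hs : TypeAIn G X s)
    (ht : TypeAIn G Y t) : mm G = mmIn G (X \ {s}) * mmIn G (Y \ {t}) := by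
  rw [typeAIn_iff_matchNumIn_diff_singleton] at hs ht
  have := h.matchNum_eq_max
  rw [h.mm_eq, if_neg (by omega), if_pos (by omega), zero_add]

theorem mm_of_not_typeAIn_of_not_typeAIn (h : BridgeSplit G X Y s t) (hs : ¬ TypeAIn G X s)
    (ht : ¬ TypeAIn G Y t) : mm G = mmIn G X * mmIn G Y := by
  rw [not_typeAIn_iff_matchNumIn_diff_singleton] at hs ht
  have := h.matchNum_eq_max
  rw [h.mm_eq, if_pos (by omega), if_neg (by omega), add_zero]

theorem mm_of_typeAIn_of_not_typeAIn (h : BridgeSplit G X Y s t) (hs : TypeAIn G X s)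
    (ht : ¬ TypeAIn G Y t) :
    mm G = mmIn G X * mmIn G Y + mmIn G (X \ {s}) * mmIn G (Y \ {t}) := by
  rw [typeAIn_iff_matchNumIn_diff_singleton] at hs
  rw [not_typeAIn_iff_matchNumIn_diff_singleton] at ht
  have := h.matchNum_eq_max
  rw [h.mm_eq, if_pos (by omega), if_pos (by omega)]

end BridgeSplit

section Sides

variable {V : Type} {G : SimpleGraph V} {s t : V}

theorem sideSet_swap (G : SimpleGraph V) (s t : V) :
    sideSet G t s = {v | (G.deleteEdges {s(s, t)}).Reachable t v} := by
  rw [sideSet, Sym2.eq_swap]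

theorem not_reachable_deleteEdges (hG : G.IsAcyclic) (hst : G.Adj s t) :
    ¬ (G.deleteEdges {s(s, t)}).Reachable s t :=
  isAcyclic_iff_forall_adj_isBridge.mp hG hst

theorem mk_ne_of_notMem {S : Set V} {a b w : V} (ha : a ∈ S) (hb : b ∈ S) {e : Sym2 V}
    (hw : w ∈ e) (hwS : w ∉ S) : s(a, b) ≠ e := by
  rintro rfl
  rcases Sym2.mem_iff.mp hw with rfl | rfl <;> contradiction

theorem bridgeSplit_compl (hG : G.IsAcyclic) (hst : G.Adj s t) :
    BridgeSplit G (sideSet G s t) (sideSet G s t)ᶜ s t where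
  adj := hst
  left_mem := mem_sideSet_self G s t
  right_mem := not_reachable_deleteEdges hG hst
  isCompl := isCompl_compl
  eq_of_adj a b hab ha hb := by
    by_cases he : s(a, b) = s(s, t)
    · rcases Sym2.eq_iff.mp he with h | ⟨rfl, -⟩
      exacts [h, absurd ha (not_reachable_deleteEdges hG hst)]
    · exact absurd (ha.trans (deleteEdges_adj.mpr ⟨hab, he⟩).reachable) hb

theorem sideSet_swap_eq_compl (hT : G.IsTree) (hst : G.Adj s t) :
    sideSet G t s = (sideSet G s t)ᶜ := by
  classical
  ext v
  rw [sideSet_swap]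
  refine ⟨fun htv hsv => not_reachable_deleteEdges hT.2 hst (hsv.trans htv.symm), fun hsv => ?_⟩
  obtain ⟨P, hP⟩ := hT.connected.exists_isPath v s
  by_cases he : s(s, t) ∈ P.edges
  · have ht := P.snd_mem_support_of_mem_edges he
    have hs := Walk.endpoint_notMem_support_takeUntil hP ht hst.ne
    refine ⟨((P.takeUntil t ht).toDeleteEdges _ fun e he' hest => ?_).reverse⟩
    obtain rfl := Set.mem_singleton_iff.mp hest
    exact hs (Walk.fst_mem_support_of_mem_edges _ he')
  · refine absurd ⟨(P.toDeleteEdges _ fun e he' hest => ?_).reverse⟩ hsv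
    obtain rfl := Set.mem_singleton_iff.mp hest
    exact he he'

theorem bridgeSplit_sideSet (hT : G.IsTree) (hst : G.Adj s t) :
    BridgeSplit G (sideSet G s t) (sideSet G t s) s t := by
  rw [sideSet_swap_eq_compl hT hst]
  exact bridgeSplit_compl hT.2 hst

theorem deleteEdges_induce_of_subset_sideSet (hG : G.IsAcyclic) (hst : G.Adj s t) {S : Set V}
    (hS : S ⊆ sideSet G s t) : (G.deleteEdges {s(s, t)}).induce S = G.induce S := by
  refine induce_eq_of_adj_iff fun a ha b hb => ?_
  rw [deleteEdges_adj, Set.mem_singleton_iff, and_iff_left_iff_imp]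
  exact fun _ => mk_ne_of_notMem (hS ha) (hS hb) (Sym2.mem_mk_right s t)
    (not_reachable_deleteEdges hG hst)

theorem sideM_eq_mmIn (hG : G.IsAcyclic) (hst : G.Adj s t) :
    sideM G s t = mmIn G (sideSet G s t) := by
  rw [sideM, sideGraph, deleteEdges_induce_of_subset_sideSet hG hst subset_rfl, mm_induce]

theorem sideMDel_eq_mmIn (hG : G.IsAcyclic) (hst : G.Adj s t) :
    sideMDel G s t = mmIn G (sideSet G s t \ {s}) := by
  rw [sideMDel, deleteEdges_induce_of_subset_sideSet hG hst Set.sdiff_subset, mm_induce]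

theorem typeA_sideRoot_iff (hG : G.IsAcyclic) (hst : G.Adj s t) :
    TypeA (sideGraph G s t) (sideRoot G s t) ↔ TypeAIn G (sideSet G s t) s := by
  rw [sideGraph, deleteEdges_induce_of_subset_sideSet hG hst subset_rfl, sideRoot, typeA_induce]

variable [Finite V]

theorem not_typeA_and_typeA_of_adj (hG : G.IsAcyclic) (hst : G.Adj s t) :
    ¬ (TypeA G s ∧ TypeA G t) := fun ⟨hs, ht⟩ =>
  ((bridgeSplit_compl hG hst).typeA_left_iff.mp hs).2
    ((bridgeSplit_compl hG hst).symm.typeA_left_iff.mp ht).1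

theorem not_typeAIn_and_typeAIn_of_adj (hG : G.IsAcyclic) {S : Set V} {a b : V} (ha : a ∈ S)
    (hb : b ∈ S) (hab : G.Adj a b) : ¬ (TypeAIn G S a ∧ TypeAIn G S b) := by
  rw [← typeA_induce ⟨a, ha⟩, ← typeA_induce ⟨b, hb⟩]
  exact not_typeA_and_typeA_of_adj (hG.induce S) hab

theorem sideSet_eq_singleton_of_forall_typeAIn (hG : G.IsAcyclic)
    (hall : ∀ v ∈ sideSet G s t, TypeAIn G (sideSet G s t) v) : sideSet G s t = {s} := by
  refine Set.eq_singleton_iff_unique_mem.mpr ⟨mem_sideSet_self G s t, fun v ⟨p⟩ => ?_⟩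
  cases p with
  | nil => rfl
  | cons hadj _ =>
    have hw : _ ∈ sideSet G s t := hadj.reachable
    exact absurd ⟨hall s (mem_sideSet_self G s t), hall _ hw⟩
      (not_typeAIn_and_typeAIn_of_adj hG (mem_sideSet_self G s t) hw (deleteEdges_adj.mp hadj).1)

end Sides

section ReplaceEdge

variable {V : Type} {G : SimpleGraph V} {X Y : Set V} {s t u : V}

def replaceEdge (G : SimpleGraph V) (s t u : V) : SimpleGraph V :=
  G.deleteEdges {s(s, t)} ⊔ edge s u

theorem replaceEdge_adj_iff_of_ne {a b : V} (hst : s(a, b) ≠ s(s, t)) (hsu : s(a, b) ≠ s(s, u)) :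
    (replaceEdge G s t u).Adj a b ↔ G.Adj a b := by
  rw [replaceEdge, sup_adj, deleteEdges_adj, Set.mem_singleton_iff, edge_adj, ← Sym2.eq_iff]
  tauto

theorem BridgeSplit.replaceEdge_adj_iff_left (h : BridgeSplit G X Y s t) (hu : u ∈ Y) {a b : V}
    (ha : a ∈ X) (hb : b ∈ X) : (replaceEdge G s t u).Adj a b ↔ G.Adj a b :=
  replaceEdge_adj_iff_of_ne
    (mk_ne_of_notMem ha hb (Sym2.mem_mk_right s t) (h.symm.notMem_right h.right_mem))
    (mk_ne_of_notMem ha hb (Sym2.mem_mk_right s u) (h.symm.notMem_right hu))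

theorem BridgeSplit.replaceEdge_adj_iff_right (h : BridgeSplit G X Y s t) {a b : V}
    (ha : a ∈ Y) (hb : b ∈ Y) : (replaceEdge G s t u).Adj a b ↔ G.Adj a b :=
  replaceEdge_adj_iff_of_ne
    (mk_ne_of_notMem ha hb (Sym2.mem_mk_left s t) (h.notMem_right h.left_mem))
    (mk_ne_of_notMem ha hb (Sym2.mem_mk_left s u) (h.notMem_right h.left_mem))

theorem BridgeSplit.toReplaceEdge (h : BridgeSplit G X Y s t) (hu : u ∈ Y) :
    BridgeSplit (replaceEdge G s t u) X Y s u where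
  adj := Or.inr ((edge_adj ..).mpr
    ⟨Or.inl ⟨rfl, rfl⟩, fun hsu => h.notMem_right h.left_mem (hsu ▸ hu)⟩)
  left_mem := h.left_mem
  right_mem := hu
  isCompl := h.isCompl
  eq_of_adj a b hab ha hb := by
    rcases hab with hab | hab
    · obtain ⟨hab, hne⟩ := deleteEdges_adj.mp hab
      obtain ⟨rfl, rfl⟩ := h.eq_of_adj hab ha hb
      exact absurd rfl hne
    · rcases ((edge_adj ..).mp hab).1 with h' | ⟨rfl, -⟩
      exacts [h', absurd hu (h.notMem_right ha)]

theorem isTree_replaceEdge (hT : G.IsTree) (hst : G.Adj s t) (hu : u ∈ sideSet G t s) :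
    (replaceEdge G s t u).IsTree := by
  have htu : (G.deleteEdges {s(s, t)}).Reachable t u := by
    rw [sideSet_swap] at hu
    exact hu
  refine ⟨(connected_iff_exists_forall_reachable _).mpr ⟨s, fun v => ?_⟩,
    (hT.2.anti (deleteEdges_le _)).sup_edge_of_not_reachable fun hsu =>
      not_reachable_deleteEdges hT.2 hst (hsu.trans htu.symm)⟩
  have hle : G.deleteEdges {s(s, t)} ≤ replaceEdge G s t u := le_sup_left
  by_cases hv : v ∈ sideSet G s t
  · exact hv.mono hle
  · have htv : v ∈ sideSet G t s := by
      rw [sideSet_swap_eq_compl hT hst]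
      exact hv
    rw [sideSet_swap] at htv
    have hsu := ((bridgeSplit_sideSet hT hst).toReplaceEdge hu).adj
    exact hsu.reachable.trans ((htu.symm.trans htv).mono hle)

theorem BridgeSplit.mm_lt_mm_replaceEdge [Finite V] (h : BridgeSplit G X Y s t) (hu : u ∈ Y)
    (hsame : TypeAIn G X s ↔ TypeAIn G Y t) (hut : TypeAIn G Y u ↔ ¬ TypeAIn G Y t) :
    mm G < mm (replaceEdge G s t u) := by
  have h' := h.toReplaceEdge hu
  have hX : ∀ a ∈ X, ∀ b ∈ X, (replaceEdge G s t u).Adj a b ↔ G.Adj a b :=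
    fun a ha b hb => h.replaceEdge_adj_iff_left hu ha hb
  have hY : ∀ a ∈ Y, ∀ b ∈ Y, (replaceEdge G s t u).Adj a b ↔ G.Adj a b :=
    fun a ha b hb => h.replaceEdge_adj_iff_right ha hb
  have eX := mmIn_congr hX
  have eY := mmIn_congr hY
  have eX' := mmIn_congr fun a (ha : a ∈ X \ {s}) b hb => hX a ha.1 b hb.1
  have eY' := mmIn_congr fun a (ha : a ∈ Y \ {u}) b hb => hY a ha.1 b hb.1
  have hsX := typeAIn_congr hX h.left_mem
  have huY := typeAIn_congr hY hu
  have := mmIn_pos G (X \ {s})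
  have := mmIn_pos G (Y \ {u})
  by_cases ht : TypeAIn G Y t
  · have hs := hsame.mpr ht
    rw [h.mm_of_typeAIn_of_typeAIn hs ht,
      h'.mm_of_typeAIn_of_not_typeAIn (hsX.mpr hs) (huY.not.mpr fun hu' => hut.mp hu' ht),
      eX, eY, eX', eY']
    have := Nat.mul_le_mul hs.mmIn_diff_singleton_le ht.mmIn_diff_singleton_le
    have := Nat.mul_pos ‹0 < mmIn G (X \ {s})› ‹0 < mmIn G (Y \ {u})›
    omega
  · rw [h.mm_of_not_typeAIn_of_not_typeAIn (mt hsame.mp ht) ht,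
      h'.symm.mm_of_typeAIn_of_not_typeAIn (huY.mpr (hut.mpr ht)) (hsX.not.mpr (mt hsame.mp ht)),
      eX, eY, eX', eY', Nat.mul_comm (mmIn G Y)]
    have := Nat.mul_pos ‹0 < mmIn G (Y \ {u})› ‹0 < mmIn G (X \ {s})›
    omega

end ReplaceEdge

section PerfectMatching

variable {V : Type} {G : SimpleGraph V}

theorem exists_adj_forall_adj_eq_of_isAcyclic [Finite V] (hG : G.IsAcyclic) {a b : V}
    (hab : G.Adj a b) : ∃ x y, G.Adj x y ∧ ∀ w, G.Adj x w → w = y := by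
  have : Nonempty V := ⟨a⟩
  obtain ⟨u, v, p, hp, hmax⟩ := Walk.exists_isPath_forall_isPath_length_le_length G
  have hnil : ¬ p.Nil := fun hn => by
    simpa [Walk.length_eq_zero_iff.mpr hn] using hmax a b _ (Path.singleton hab).2
  refine ⟨u, p.snd, p.adj_snd hnil, fun w hw => hG.eq_snd_of_adj_start hp hw ?_⟩
  by_contra hwp
  simpa using hmax w v (Walk.cons hw.symm p) (hp.cons hwp)

theorem IsMatchingIn.diff_pair {S : Set V} {M : Set (Sym2 V)} (hM : IsMatchingIn G S M) {x y : V}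
    (hxy : s(x, y) ∈ M) : IsMatchingIn G (S \ {x, y}) (M \ {s(x, y)}) :=
  ⟨hM.1.subset Set.sdiff_subset, fun f ⟨hf, hne⟩ => mem_sym2_iff_forall.mpr fun w hw =>
    ⟨mem_sym2_iff_forall.mp (hM.2 hf) w hw, fun hw' => hne <| hM.1.eq_of_mem hf hxy hw <| by
      rcases hw' with rfl | rfl <;> simp⟩⟩

theorem eq_of_isMatchingIn_of_forall_covers [Finite V] (hG : G.IsAcyclic) (S : Set V)
    {M M' : Set (Sym2 V)} (hM : IsMatchingIn G S M) (hM' : IsMatchingIn G S M')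
    (hc : ∀ v ∈ S, Covers M v) (hc' : ∀ v ∈ S, Covers M' v) : M = M' := by
  -- A leaf `x` of `G.induce S` is matched to its only neighbour `y` by both matchings;
  -- remove that edge and induct.
  induction hn : S.ncard using Nat.strong_induction_on generalizing S M M' with
  | _ n ih =>
  rcases S.eq_empty_or_nonempty with rfl | ⟨v, hv⟩
  · have hM₀ : M = ∅ := Set.subset_empty_iff.mp (by simpa using hM.2)
    have hM'₀ : M' = ∅ := Set.subset_empty_iff.mp (by simpa using hM'.2)
    rw [hM₀, hM'₀]
  obtain ⟨e, he, -⟩ := hc v hv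
  obtain ⟨a, b, hab⟩ : ∃ a b : S, (G.induce S).Adj a b := by
    induction e with
    | _ a b => exact ⟨⟨a, (hM.2 he).1⟩, ⟨b, (hM.2 he).2⟩, hM.1.1 he⟩
  obtain ⟨x, y, -, hleaf⟩ := exists_adj_forall_adj_eq_of_isAcyclic (hG.induce S) hab
  have hxy : ∀ {N}, IsMatchingIn G S N → (∀ v ∈ S, Covers N v) → s(↑x, ↑y) ∈ N := by
    intro N hN hcN
    obtain ⟨f, hf, hxf⟩ := hcN x x.2
    rw [← Sym2.other_spec hxf] at hf
    have hw : Sym2.Mem.other hxf ∈ S := (Set.mk_mem_sym2_iff.mp (hN.2 hf)).2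
    have hwy : Sym2.Mem.other hxf = y := congrArg Subtype.val (hleaf ⟨_, hw⟩ (hN.1.1 hf))
    rwa [hwy] at hf
  have hcov : ∀ {N}, (∀ v ∈ S, Covers N v) → ∀ v ∈ S \ {↑x, ↑y}, Covers (N \ {s(↑x, ↑y)}) v := by
    intro N hcN v hv
    obtain ⟨f, hf, hvf⟩ := hcN v hv.1
    refine ⟨f, ⟨hf, fun hfxy => hv.2 ?_⟩, hvf⟩
    rw [Set.mem_singleton_iff.mp hfxy] at hvf
    rcases Sym2.mem_iff.mp hvf with rfl | rfl <;> simp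
  have hlt : (S \ {↑x, ↑y}).ncard < n :=
    hn ▸ Set.ncard_lt_ncard ⟨Set.sdiff_subset, fun h => (h x.2).2 (Or.inl rfl)⟩
  rw [← Set.insert_sdiff_self_of_mem (hxy hM hc), ← Set.insert_sdiff_self_of_mem (hxy hM' hc'),
    ih _ hlt _ (hM.diff_pair (hxy hM hc)) (hM'.diff_pair (hxy hM' hc')) (hcov hc) (hcov hc') rfl]

theorem mmIn_eq_one_of_forall_not_typeAIn [Finite V] (hG : G.IsAcyclic) {S : Set V}
    (hS : ∀ v ∈ S, ¬ TypeAIn G S v) : mmIn G S = 1 := by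
  have hcov : ∀ M ∈ MaximumMatchingsIn G S, ∀ v ∈ S, Covers M v :=
    fun M hM v hv => by_contra fun hc => hS v hv ⟨M, hM, hc⟩
  obtain ⟨M, hM⟩ := maximumMatchingsIn_nonempty G S
  rw [mmIn, Set.ncard_eq_one]
  exact ⟨M, Set.eq_singleton_iff_unique_mem.mpr ⟨hM, fun N hN =>
    eq_of_isMatchingIn_of_forall_covers hG S hN.1 hM.1 (hcov N hN) (hcov M hM)⟩⟩

end PerfectMatching

theorem two_le_mm_starGraph {V : Type} [Finite V] {r a b : V} (hra : r ≠ a) (hrb : r ≠ b)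
    (hab : a ≠ b) : 2 ≤ mm (starGraph r) := by
  have hr : ∀ {M}, IsMatchingSet (starGraph r) M → ∀ e ∈ M, r ∈ e := fun hM e he => by
    induction e with
    | _ x y => rcases (starGraph_adj.mp (hM.1 he)).2 with rfl | rfl <;> simp
  have hsingle : ∀ c, r ≠ c → {s(r, c)} ∈ MaximumMatchings (starGraph r) := fun c hc =>
    mem_maximumMatchings_of_forall_ncard_le
      ⟨Set.singleton_subset_iff.mpr (starGraph_center_adj hc), Set.pairwise_singleton _ _⟩
      fun N hN => (Set.ncard_singleton _).symm ▸ ((Set.ncard_le_one (Set.toFinite _)).mpr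
        fun e he f hf => hN.eq_of_mem he hf (hr hN e he) (hr hN f hf))
  exact (Set.one_lt_ncard_iff).mpr ⟨_, _, hsingle a hra, hsingle b hrb, by
    simp [hab, hrb]⟩

namespace OptimalTree

variable {V : Type} [Fintype V] {G : SimpleGraph V}

theorem mm_le (hopt : OptimalTree G) {W : Type} [Finite W] {H : SimpleGraph W}
    (hH : H.IsTree) (hcard : Nat.card W = Fintype.card V) : mm H ≤ mm G := by
  let φ := Iso.map (Finite.equivFinOfCardEq hcard) H
  rw [mm_iso φ]
  exact hopt.2 _ (φ.isTree_iff.mp hH)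

theorem two_le_mm (hopt : OptimalTree G) (h3 : 3 ≤ Fintype.card V) : 2 ≤ mm G :=
  (two_le_mm_starGraph (r := ⟨0, by omega⟩) (a := ⟨1, by omega⟩) (b := ⟨2, by omega⟩)
    (by simp [Fin.ext_iff]) (by simp [Fin.ext_iff]) (by simp [Fin.ext_iff])).trans
    (hopt.2 _ (isTree_starGraph _))

theorem typeAIn_sideSet_iff_root (hopt : OptimalTree G) {s t : V} (hst : G.Adj s t)
    (hsame : TypeAIn G (sideSet G s t) s ↔ TypeAIn G (sideSet G t s) t) :
    ∀ u ∈ sideSet G t s, TypeAIn G (sideSet G t s) u ↔ TypeAIn G (sideSet G t s) t := by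
  intro u hu
  by_contra hut
  exact (hopt.mm_le (isTree_replaceEdge hopt.1 hst hu) Nat.card_eq_fintype_card).not_gt
    ((bridgeSplit_sideSet hopt.1 hst).mm_lt_mm_replaceEdge hu hsame (by tauto))

theorem not_typeAIn_sideSet_iff (hopt : OptimalTree G) (h3 : 3 ≤ Fintype.card V) {s t : V}
    (hst : G.Adj s t) : ¬ (TypeAIn G (sideSet G s t) s ↔ TypeAIn G (sideSet G t s) t) := by
  intro hsame
  have h := bridgeSplit_sideSet hopt.1 hst
  have hX := hopt.typeAIn_sideSet_iff_root hst.symm hsame.symm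
  have hY := hopt.typeAIn_sideSet_iff_root hst hsame
  by_cases ht : TypeAIn G (sideSet G t s) t
  · have hXs := sideSet_eq_singleton_of_forall_typeAIn hopt.1.2
      fun v hv => (hX v hv).mpr (hsame.mpr ht)
    have hYt := sideSet_eq_singleton_of_forall_typeAIn hopt.1.2 fun v hv => (hY v hv).mpr ht
    have huniv : (Set.univ : Set V) ⊆ {s, t} := fun v _ => by
      by_cases hv : v ∈ sideSet G s t
      · rw [hXs] at hv
        exact Or.inl hv
      · have hv := h.mem_right_iff.mpr hv
        rw [hYt] at hv
        exact Or.inr hv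
    have := Set.ncard_le_ncard huniv
    rw [Set.ncard_univ, Nat.card_eq_fintype_card, Set.ncard_pair hst.ne] at this
    omega
  · have hmm := h.mm_of_not_typeAIn_of_not_typeAIn (mt hsame.mp ht) ht
    rw [mmIn_eq_one_of_forall_not_typeAIn hopt.1.2 fun v hv => (hX v hv).not.mpr (mt hsame.mp ht),
      mmIn_eq_one_of_forall_not_typeAIn hopt.1.2 fun v hv => (hY v hv).not.mpr ht] at hmm
    have := hopt.two_le_mm h3
    omega

end OptimalTree

/-- in an optimal tree of order at least 3, every edge joins a vertex of
type A to a vertex of type B; moreover, for an edge `st` with `s` of type A and `t` of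
type B, `s` is of type A in its component `T_s` of `T − st`, `t` is of type B in `T_t`,
and `m(T) = m(T_s)m(T_t) + m(T_s − s)m(T_t − t)`. -/
theorem stmt_13 {V : Type} [Fintype V] (G : SimpleGraph V) (hopt : OptimalTree G)
    (h3 : 3 ≤ Fintype.card V) :
    (∀ s t : V, G.Adj s t → ((TypeA G s ∧ TypeB G t) ∨ (TypeB G s ∧ TypeA G t))) ∧
    (∀ s t : V, G.Adj s t → TypeA G s → TypeB G t →
      TypeA (sideGraph G s t) (sideRoot G s t) ∧
      TypeB (sideGraph G t s) (sideRoot G t s) ∧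
      mm G = sideM G s t * sideM G t s + sideMDel G s t * sideMDel G t s) := by
  have hT := hopt.1
  refine ⟨fun s t hst => ?_, fun s t hst hs _ => ?_⟩
  · have h := bridgeSplit_sideSet hT hst
    have := hopt.not_typeAIn_sideSet_iff h3 hst
    rw [TypeB, TypeB, h.typeA_left_iff, h.symm.typeA_left_iff]
    tauto
  · have h := bridgeSplit_sideSet hT hst
    obtain ⟨hsA, htB⟩ := h.typeA_left_iff.mp hs
    refine ⟨(typeA_sideRoot_iff hT.2 hst).mpr hsA, mt (typeA_sideRoot_iff hT.2 hst.symm).mp htB, ?_⟩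
    rw [h.mm_of_typeAIn_of_not_typeAIn hsA htB, sideM_eq_mmIn hT.2 hst, sideM_eq_mmIn hT.2 hst.symm,
      sideMDel_eq_mmIn hT.2 hst, sideMDel_eq_mmIn hT.2 hst.symm]

end PaperMM
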